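/- arXiv:1507.05710 — 2 statements merged into one kernel-verified Lean document; each statement's English description precedes it below -/
import Mathlib

section
/- The Weyl group $W(E_6)$ acts transitively on the set of exceptional vectors: for any two exceptional vectors $\ell,\ell'$ there exists $w\in W(E_6)$ with $w(\ell)=\ell'$. -/
/-- The symmetric bilinear form on `ℤ^{1,6}`: `⟨x,y⟩ = x₀y₀ - ∑_{i=1}^{6} xᵢyᵢ`. -/
def form (x y : Fin 7 → ℤ) : ℤ := 2 * (x 0 * y 0) - ∑ i, x i * y i

/-- The standard basis vector `f i`. -/
def fvec (i : Fin 7) : Fin 7 → ℤ := fun j => if j = i then 1 else 0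

/-- The canonical vector `k = -3f₀ + f₁ + ⋯ + f₆`. -/
def kvec : Fin 7 → ℤ := fun i => if i = 0 then -3 else 1

/-- A root of the `E₆` lattice: `⟨r,k⟩ = 0` and `⟨r,r⟩ = -2`. -/
def IsRoot (r : Fin 7 → ℤ) : Prop := form r kvec = 0 ∧ form r r = -2

/-- An exceptional vector: `⟨ℓ,ℓ⟩ = -1` and `⟨ℓ,k⟩ = -1`. -/
def IsExc (l : Fin 7 → ℤ) : Prop := form l l = -1 ∧ form l kvec = -1

/-- The reflection in a root `r`, as a plain function: `x ↦ x + ⟨x,r⟩ r`. -/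
def reflFun (r : Fin 7 → ℤ) (x : Fin 7 → ℤ) : Fin 7 → ℤ := x + form x r • r

lemma form_add_left (x y z : Fin 7 → ℤ) : form (x + y) z = form x z + form y z := by
  simp only [form, Pi.add_apply, add_mul, Finset.sum_add_distrib]
  ring

lemma form_smul_left (c : ℤ) (x y : Fin 7 → ℤ) : form (c • x) y = c * form x y := by
  simp only [form, Pi.smul_apply, smul_eq_mul, mul_assoc, ← Finset.mul_sum]
  ring

/-- The reflection in a root `r`, as a linear map. -/
def reflL (r : Fin 7 → ℤ) : (Fin 7 → ℤ) →ₗ[ℤ] (Fin 7 → ℤ) where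
  toFun := reflFun r
  map_add' x y := by
    simp only [reflFun, form_add_left, add_smul]
    abel
  map_smul' c x := by
    simp only [reflFun, form_smul_left, mul_smul, RingHom.id_apply, smul_add]

lemma reflFun_invol (r : Fin 7 → ℤ) (hr : IsRoot r) (x : Fin 7 → ℤ) :
    reflFun r (reflFun r x) = x := by
  have h : form (x + form x r • r) r = -form x r := by
    rw [form_add_left, form_smul_left, hr.2]; ring
  unfold reflFun
  rw [h, neg_smul]
  abel

/-- The reflection in a root `r`, as a linear automorphism of `ℤ^{1,6}`. -/
def reflEquiv (r : Fin 7 → ℤ) (hr : IsRoot r) : (Fin 7 → ℤ) ≃ₗ[ℤ] (Fin 7 → ℤ) :=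
  LinearEquiv.ofLinear (reflL r) (reflL r)
    (LinearMap.ext fun x => reflFun_invol r hr x)
    (LinearMap.ext fun x => reflFun_invol r hr x)

/-- The Weyl group `W(E₆)`: the subgroup of `GL(ℤ^{1,6})` generated by the reflections
in the roots of the `E₆` lattice. -/
def WE6 : Subgroup ((Fin 7 → ℤ) ≃ₗ[ℤ] (Fin 7 → ℤ)) :=
  Subgroup.closure {g | ∃ r, ∃ hr : IsRoot r, g = reflEquiv r hr}



-- auxiliary lemmas
def excList : List (Fin 7 → ℤ) := [![0,0,0,0,0,0,1], ![0,0,0,0,0,1,0], ![0,0,0,0,1,0,0], ![0,0,0,1,0,0,0], ![0,0,1,0,0,0,0], ![0,1,0,0,0,0,0], ![1,-1,-1,0,0,0,0], ![1,-1,0,-1,0,0,0], ![1,-1,0,0,-1,0,0], ![1,-1,0,0,0,-1,0], ![1,-1,0,0,0,0,-1], ![1,0,-1,-1,0,0,0], ![1,0,-1,0,-1,0,0], ![1,0,-1,0,0,-1,0], ![1,0,-1,0,0,0,-1], ![1,0,0,-1,-1,0,0], ![1,0,0,-1,0,-1,0], ![1,0,0,-1,0,0,-1], ![1,0,0,0,-1,-1,0],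 ![1,0,0,0,-1,0,-1], ![1,0,0,0,0,-1,-1], ![2,-1,-1,-1,-1,-1,0], ![2,-1,-1,-1,-1,0,-1], ![2,-1,-1,-1,0,-1,-1], ![2,-1,-1,0,-1,-1,-1], ![2,-1,0,-1,-1,-1,-1], ![2,0,-1,-1,-1,-1,-1]]

lemma eta7 (l : Fin 7 → ℤ) : l = ![l 0, l 1, l 2, l 3, l 4, l 5, l 6] := by
  funext i; fin_cases i <;> rfl

set_option maxHeartbeats 2000000 in
lemma enum0 : ∀ b ∈ Finset.Icc (-1:ℤ) 1, ∀ c ∈ Finset.Icc (-1:ℤ) 1, ∀ d ∈ Finset.Icc (-1:ℤ) 1, ∀ e ∈ Finset.Icc (-1:ℤ) 1, ∀ f ∈ Finset.Icc (-1:ℤ) 1, ∀ g ∈ Finset.Icc (-1:ℤ) 1,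
    b*b + c*c + d*d + e*e + f*f + g*g = 1 → b + c + d + e + f + g = 1 →
    (b,c,d,e,f,g) ∈ ([(0,0,0,0,0,1), (0,0,0,0,1,0), (0,0,0,1,0,0), (0,0,1,0,0,0), (0,1,0,0,0,0), (1,0,0,0,0,0)] : List (ℤ×ℤ×ℤ×ℤ×ℤ×ℤ)) := by decide

set_option maxHeartbeats 2000000 in
lemma enum1 : ∀ b ∈ Finset.Icc (-1:ℤ) 1, ∀ c ∈ Finset.Icc (-1:ℤ) 1, ∀ d ∈ Finset.Icc (-1:ℤ) 1, ∀ e ∈ Finset.Icc (-1:ℤ) 1, ∀ f ∈ Finset.Icc (-1:ℤ) 1, ∀ g ∈ Finset.Icc (-1:ℤ) 1,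
    b*b + c*c + d*d + e*e + f*f + g*g = 2 → b + c + d + e + f + g = -2 →
    (b,c,d,e,f,g) ∈ ([(-1,-1,0,0,0,0), (-1,0,-1,0,0,0), (-1,0,0,-1,0,0), (-1,0,0,0,-1,0), (-1,0,0,0,0,-1), (0,-1,-1,0,0,0), (0,-1,0,-1,0,0), (0,-1,0,0,-1,0), (0,-1,0,0,0,-1), (0,0,-1,-1,0,0), (0,0,-1,0,-1,0), (0,0,-1,0,0,-1), (0,0,0,-1,-1,0), (0,0,0,-1,0,-1), (0,0,0,0,-1,-1)] : List (ℤ×ℤ×ℤ×ℤ×ℤ×ℤ)) := by decide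

set_option maxHeartbeats 2000000 in
lemma enum2 : ∀ b ∈ Finset.Icc (-2:ℤ) 2, ∀ c ∈ Finset.Icc (-2:ℤ) 2, ∀ d ∈ Finset.Icc (-2:ℤ) 2, ∀ e ∈ Finset.Icc (-2:ℤ) 2, ∀ f ∈ Finset.Icc (-2:ℤ) 2, ∀ g ∈ Finset.Icc (-2:ℤ) 2,
    b*b + c*c + d*d + e*e + f*f + g*g = 5 → b + c + d + e + f + g = -5 →
    (b,c,d,e,f,g) ∈ ([(-1,-1,-1,-1,-1,0), (-1,-1,-1,-1,0,-1), (-1,-1,-1,0,-1,-1), (-1,-1,0,-1,-1,-1), (-1,0,-1,-1,-1,-1), (0,-1,-1,-1,-1,-1)] : List (ℤ×ℤ×ℤ×ℤ×ℤ×ℤ)) := by decide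

lemma bnd2 (x : ℤ) (h : x*x ≤ 5) : -2 ≤ x ∧ x ≤ 2 := by
  constructor <;> nlinarith
lemma bnd1 (x : ℤ) (h : x*x ≤ 2) : -1 ≤ x ∧ x ≤ 1 := by
  constructor <;> nlinarith

set_option maxHeartbeats 2000000 in
lemma classify (l : Fin 7 → ℤ) (hl : IsExc l) : l ∈ excList := by
  have h1 : l 0 * l 0 - l 1*l 1 - l 2*l 2 - l 3*l 3 - l 4*l 4 - l 5*l 5 - l 6*l 6 = -1 := by
    have h := hl.1
    simp [form, Fin.sum_univ_seven] at h
    linarith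
  have h2 : 3*(l 0) + l 1 + l 2 + l 3 + l 4 + l 5 + l 6 = 1 := by
    have h := hl.2
    simp [form, kvec, Fin.sum_univ_seven] at h
    linarith
  obtain ⟨a, ha⟩ : ∃ x, l 0 = x := ⟨_, rfl⟩
  obtain ⟨b, hb⟩ : ∃ x, l 1 = x := ⟨_, rfl⟩
  obtain ⟨c, hc⟩ : ∃ x, l 2 = x := ⟨_, rfl⟩
  obtain ⟨d, hd⟩ : ∃ x, l 3 = x := ⟨_, rfl⟩
  obtain ⟨e, he⟩ : ∃ x, l 4 = x := ⟨_, rfl⟩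
  obtain ⟨f, hf⟩ : ∃ x, l 5 = x := ⟨_, rfl⟩
  obtain ⟨g, hg⟩ : ∃ x, l 6 = x := ⟨_, rfl⟩
  rw [ha, hb, hc, hd, he, hf, hg] at h1 h2
  have h5 : 3*a^2 - 6*a - 5 ≤ 0 := by
    nlinarith [sq_nonneg (b-c), sq_nonneg (b-d), sq_nonneg (b-e), sq_nonneg (b-f), sq_nonneg (b-g),
      sq_nonneg (c-d), sq_nonneg (c-e), sq_nonneg (c-f), sq_nonneg (c-g),
      sq_nonneg (d-e), sq_nonneg (d-f), sq_nonneg (d-g),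
      sq_nonneg (e-f), sq_nonneg (e-g), sq_nonneg (f-g)]
  have ha0 : 0 ≤ a := by nlinarith [sq_nonneg (a+1)]
  have ha2 : a ≤ 2 := by nlinarith [sq_nonneg (a-3)]
  have hav : a = 0 ∨ a = 1 ∨ a = 2 := by omega
  rcases hav with rfl | rfl | rfl
  · have hsq : b*b + c*c + d*d + e*e + f*f + g*g = 1 := by linarith
    have hsum : b + c + d + e + f + g = 1 := by linarith
    obtain ⟨hbl, hbu⟩ := bnd1 b (by linarith [mul_self_nonneg c, mul_self_nonneg d, mul_self_nonneg e, mul_self_nonneg f, mul_self_nonneg g])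
    obtain ⟨hcl, hcu⟩ := bnd1 c (by linarith [mul_self_nonneg b, mul_self_nonneg d, mul_self_nonneg e, mul_self_nonneg f, mul_self_nonneg g])
    obtain ⟨hdl, hdu⟩ := bnd1 d (by linarith [mul_self_nonneg b, mul_self_nonneg c, mul_self_nonneg e, mul_self_nonneg f, mul_self_nonneg g])
    obtain ⟨hel, heu⟩ := bnd1 e (by linarith [mul_self_nonneg b, mul_self_nonneg c, mul_self_nonneg d, mul_self_nonneg f, mul_self_nonneg g])
    obtain ⟨hfl, hfu⟩ := bnd1 f (by linarith [mul_self_nonneg b, mul_self_nonneg c, mul_self_nonneg d, mul_self_nonneg e, mul_self_nonneg g])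
    obtain ⟨hgl, hgu⟩ := bnd1 g (by linarith [mul_self_nonneg b, mul_self_nonneg c, mul_self_nonneg d, mul_self_nonneg e, mul_self_nonneg f])
    have hm := enum0 b (Finset.mem_Icc.mpr ⟨by omega, by omega⟩) c (Finset.mem_Icc.mpr ⟨by omega, by omega⟩) d (Finset.mem_Icc.mpr ⟨by omega, by omega⟩) e (Finset.mem_Icc.mpr ⟨by omega, by omega⟩) f (Finset.mem_Icc.mpr ⟨by omega, by omega⟩) g (Finset.mem_Icc.mpr ⟨by omega, by omega⟩) hsq hsum
    simp only [List.mem_cons, List.not_mem_nil, or_false, Prod.mk.injEq] at hm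
    rcases hm with ⟨rfl,rfl,rfl,rfl,rfl,rfl⟩ | ⟨rfl,rfl,rfl,rfl,rfl,rfl⟩ | ⟨rfl,rfl,rfl,rfl,rfl,rfl⟩ | ⟨rfl,rfl,rfl,rfl,rfl,rfl⟩ | ⟨rfl,rfl,rfl,rfl,rfl,rfl⟩ | ⟨rfl,rfl,rfl,rfl,rfl,rfl⟩ <;>
      (rw [eta7 l, ha, hb, hc, hd, he, hf, hg]; decide)
  · have hsq : b*b + c*c + d*d + e*e + f*f + g*g = 2 := by linarith
    have hsum : b + c + d + e + f + g = -2 := by linarith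
    obtain ⟨hbl, hbu⟩ := bnd1 b (by linarith [mul_self_nonneg c, mul_self_nonneg d, mul_self_nonneg e, mul_self_nonneg f, mul_self_nonneg g])
    obtain ⟨hcl, hcu⟩ := bnd1 c (by linarith [mul_self_nonneg b, mul_self_nonneg d, mul_self_nonneg e, mul_self_nonneg f, mul_self_nonneg g])
    obtain ⟨hdl, hdu⟩ := bnd1 d (by linarith [mul_self_nonneg b, mul_self_nonneg c, mul_self_nonneg e, mul_self_nonneg f, mul_self_nonneg g])
    obtain ⟨hel, heu⟩ := bnd1 e (by linarith [mul_self_nonneg b, mul_self_nonneg c, mul_self_nonneg d, mul_self_nonneg f, mul_self_nonneg g])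
    obtain ⟨hfl, hfu⟩ := bnd1 f (by linarith [mul_self_nonneg b, mul_self_nonneg c, mul_self_nonneg d, mul_self_nonneg e, mul_self_nonneg g])
    obtain ⟨hgl, hgu⟩ := bnd1 g (by linarith [mul_self_nonneg b, mul_self_nonneg c, mul_self_nonneg d, mul_self_nonneg e, mul_self_nonneg f])
    have hm := enum1 b (Finset.mem_Icc.mpr ⟨by omega, by omega⟩) c (Finset.mem_Icc.mpr ⟨by omega, by omega⟩) d (Finset.mem_Icc.mpr ⟨by omega, by omega⟩) e (Finset.mem_Icc.mpr ⟨by omega, by omega⟩) f (Finset.mem_Icc.mpr ⟨by omega, by omega⟩) g (Finset.mem_Icc.mpr ⟨by omega, by omega⟩) hsq hsum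
    simp only [List.mem_cons, List.not_mem_nil, or_false, Prod.mk.injEq] at hm
    rcases hm with ⟨rfl,rfl,rfl,rfl,rfl,rfl⟩ | ⟨rfl,rfl,rfl,rfl,rfl,rfl⟩ | ⟨rfl,rfl,rfl,rfl,rfl,rfl⟩ | ⟨rfl,rfl,rfl,rfl,rfl,rfl⟩ | ⟨rfl,rfl,rfl,rfl,rfl,rfl⟩ | ⟨rfl,rfl,rfl,rfl,rfl,rfl⟩ | ⟨rfl,rfl,rfl,rfl,rfl,rfl⟩ | ⟨rfl,rfl,rfl,rfl,rfl,rfl⟩ | ⟨rfl,rfl,rfl,rfl,rfl,rfl⟩ | ⟨rfl,rfl,rfl,rfl,rfl,rfl⟩ | ⟨rfl,rfl,rfl,rfl,rfl,rfl⟩ | ⟨rfl,rfl,rfl,rfl,rfl,rfl⟩ | ⟨rfl,rfl,rfl,rfl,rfl,rfl⟩ | ⟨rfl,rfl,rfl,rfl,rfl,rfl⟩ | ⟨rfl,rfl,rfl,rfl,rfl,rfl⟩ <;>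
      (rw [eta7 l, ha, hb, hc, hd, he, hf, hg]; decide)
  · have hsq : b*b + c*c + d*d + e*e + f*f + g*g = 5 := by linarith
    have hsum : b + c + d + e + f + g = -5 := by linarith
    obtain ⟨hbl, hbu⟩ := bnd2 b (by linarith [mul_self_nonneg c, mul_self_nonneg d, mul_self_nonneg e, mul_self_nonneg f, mul_self_nonneg g])
    obtain ⟨hcl, hcu⟩ := bnd2 c (by linarith [mul_self_nonneg b, mul_self_nonneg d, mul_self_nonneg e, mul_self_nonneg f, mul_self_nonneg g])
    obtain ⟨hdl, hdu⟩ := bnd2 d (by linarith [mul_self_nonneg b, mul_self_nonneg c, mul_self_nonneg e, mul_self_nonneg f, mul_self_nonneg g])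
    obtain ⟨hel, heu⟩ := bnd2 e (by linarith [mul_self_nonneg b, mul_self_nonneg c, mul_self_nonneg d, mul_self_nonneg f, mul_self_nonneg g])
    obtain ⟨hfl, hfu⟩ := bnd2 f (by linarith [mul_self_nonneg b, mul_self_nonneg c, mul_self_nonneg d, mul_self_nonneg e, mul_self_nonneg g])
    obtain ⟨hgl, hgu⟩ := bnd2 g (by linarith [mul_self_nonneg b, mul_self_nonneg c, mul_self_nonneg d, mul_self_nonneg e, mul_self_nonneg f])
    have hm := enum2 b (Finset.mem_Icc.mpr ⟨by omega, by omega⟩) c (Finset.mem_Icc.mpr ⟨by omega, by omega⟩) d (Finset.mem_Icc.mpr ⟨by omega, by omega⟩) e (Finset.mem_Icc.mpr ⟨by omega, by omega⟩) f (Finset.mem_Icc.mpr ⟨by omega, by omega⟩) g (Finset.mem_Icc.mpr ⟨by omega, by omega⟩) hsq hsum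
    simp only [List.mem_cons, List.not_mem_nil, or_false, Prod.mk.injEq] at hm
    rcases hm with ⟨rfl,rfl,rfl,rfl,rfl,rfl⟩ | ⟨rfl,rfl,rfl,rfl,rfl,rfl⟩ | ⟨rfl,rfl,rfl,rfl,rfl,rfl⟩ | ⟨rfl,rfl,rfl,rfl,rfl,rfl⟩ | ⟨rfl,rfl,rfl,rfl,rfl,rfl⟩ | ⟨rfl,rfl,rfl,rfl,rfl,rfl⟩ <;>
      (rw [eta7 l, ha, hb, hc, hd, he, hf, hg]; decide)

set_option maxHeartbeats 2000000 in
lemma toBase (l : Fin 7 → ℤ) (h : l ∈ excList) : ∃ w ∈ WE6, w l = fvec 1 := by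
  fin_cases h
  · exact ⟨reflEquiv ![0,1,0,0,0,0,-1] (by constructor <;> decide), Subgroup.subset_closure ⟨_, _, rfl⟩, by decide⟩
  · exact ⟨reflEquiv ![0,1,0,0,0,-1,0] (by constructor <;> decide), Subgroup.subset_closure ⟨_, _, rfl⟩, by decide⟩
  · exact ⟨reflEquiv ![0,1,0,0,-1,0,0] (by constructor <;> decide), Subgroup.subset_closure ⟨_, _, rfl⟩, by decide⟩
  · exact ⟨reflEquiv ![0,1,0,-1,0,0,0] (by constructor <;> decide), Subgroup.subset_closure ⟨_, _, rfl⟩, by decide⟩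
  · exact ⟨reflEquiv ![0,1,-1,0,0,0,0] (by constructor <;> decide), Subgroup.subset_closure ⟨_, _, rfl⟩, by decide⟩
  · exact ⟨1, one_mem _, by decide⟩
  · exact ⟨reflEquiv ![0,1,0,-1,0,0,0] (by constructor <;> decide) * reflEquiv ![1,-1,-1,-1,0,0,0] (by constructor <;> decide), mul_mem (Subgroup.subset_closure ⟨_, _, rfl⟩) (Subgroup.subset_closure ⟨_, _, rfl⟩), by decide⟩
  · exact ⟨reflEquiv ![0,1,-1,0,0,0,0] (by constructor <;> decide) * reflEquiv ![1,-1,-1,-1,0,0,0] (by constructor <;> decide), mul_mem (Subgroup.subset_closure ⟨_, _, rfl⟩) (Subgroup.subset_closure ⟨_, _, rfl⟩), by decide⟩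
  · exact ⟨reflEquiv ![0,1,-1,0,0,0,0] (by constructor <;> decide) * reflEquiv ![1,-1,-1,0,-1,0,0] (by constructor <;> decide), mul_mem (Subgroup.subset_closure ⟨_, _, rfl⟩) (Subgroup.subset_closure ⟨_, _, rfl⟩), by decide⟩
  · exact ⟨reflEquiv ![0,1,-1,0,0,0,0] (by constructor <;> decide) * reflEquiv ![1,-1,-1,0,0,-1,0] (by constructor <;> decide), mul_mem (Subgroup.subset_closure ⟨_, _, rfl⟩) (Subgroup.subset_closure ⟨_, _, rfl⟩), by decide⟩
  · exact ⟨reflEquiv ![0,1,-1,0,0,0,0] (by constructor <;> decide) * reflEquiv ![1,-1,-1,0,0,0,-1] (by constructor <;> decide), mul_mem (Subgroup.subset_closure ⟨_, _, rfl⟩) (Subgroup.subset_closure ⟨_, _, rfl⟩), by decide⟩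
  · exact ⟨reflEquiv ![1,-1,-1,-1,0,0,0] (by constructor <;> decide), Subgroup.subset_closure ⟨_, _, rfl⟩, by decide⟩
  · exact ⟨reflEquiv ![1,-1,-1,0,-1,0,0] (by constructor <;> decide), Subgroup.subset_closure ⟨_, _, rfl⟩, by decide⟩
  · exact ⟨reflEquiv ![1,-1,-1,0,0,-1,0] (by constructor <;> decide), Subgroup.subset_closure ⟨_, _, rfl⟩, by decide⟩
  · exact ⟨reflEquiv ![1,-1,-1,0,0,0,-1] (by constructor <;> decide), Subgroup.subset_closure ⟨_, _, rfl⟩, by decide⟩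
  · exact ⟨reflEquiv ![1,-1,0,-1,-1,0,0] (by constructor <;> decide), Subgroup.subset_closure ⟨_, _, rfl⟩, by decide⟩
  · exact ⟨reflEquiv ![1,-1,0,-1,0,-1,0] (by constructor <;> decide), Subgroup.subset_closure ⟨_, _, rfl⟩, by decide⟩
  · exact ⟨reflEquiv ![1,-1,0,-1,0,0,-1] (by constructor <;> decide), Subgroup.subset_closure ⟨_, _, rfl⟩, by decide⟩
  · exact ⟨reflEquiv ![1,-1,0,0,-1,-1,0] (by constructor <;> decide), Subgroup.subset_closure ⟨_, _, rfl⟩, by decide⟩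
  · exact ⟨reflEquiv ![1,-1,0,0,-1,0,-1] (by constructor <;> decide), Subgroup.subset_closure ⟨_, _, rfl⟩, by decide⟩
  · exact ⟨reflEquiv ![1,-1,0,0,0,-1,-1] (by constructor <;> decide), Subgroup.subset_closure ⟨_, _, rfl⟩, by decide⟩
  · exact ⟨reflEquiv ![0,1,0,0,0,0,-1] (by constructor <;> decide) * reflEquiv ![2,-1,-1,-1,-1,-1,-1] (by constructor <;> decide), mul_mem (Subgroup.subset_closure ⟨_, _, rfl⟩) (Subgroup.subset_closure ⟨_, _, rfl⟩), by decide⟩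
  · exact ⟨reflEquiv ![0,1,0,0,0,-1,0] (by constructor <;> decide) * reflEquiv ![2,-1,-1,-1,-1,-1,-1] (by constructor <;> decide), mul_mem (Subgroup.subset_closure ⟨_, _, rfl⟩) (Subgroup.subset_closure ⟨_, _, rfl⟩), by decide⟩
  · exact ⟨reflEquiv ![0,1,0,0,-1,0,0] (by constructor <;> decide) * reflEquiv ![2,-1,-1,-1,-1,-1,-1] (by constructor <;> decide), mul_mem (Subgroup.subset_closure ⟨_, _, rfl⟩) (Subgroup.subset_closure ⟨_, _, rfl⟩), by decide⟩
  · exact ⟨reflEquiv ![0,1,0,-1,0,0,0] (by constructor <;> decide) * reflEquiv ![2,-1,-1,-1,-1,-1,-1] (by constructor <;> decide), mul_mem (Subgroup.subset_closure ⟨_, _, rfl⟩) (Subgroup.subset_closure ⟨_, _, rfl⟩), by decide⟩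
  · exact ⟨reflEquiv ![0,1,-1,0,0,0,0] (by constructor <;> decide) * reflEquiv ![2,-1,-1,-1,-1,-1,-1] (by constructor <;> decide), mul_mem (Subgroup.subset_closure ⟨_, _, rfl⟩) (Subgroup.subset_closure ⟨_, _, rfl⟩), by decide⟩
  · exact ⟨reflEquiv ![2,-1,-1,-1,-1,-1,-1] (by constructor <;> decide), Subgroup.subset_closure ⟨_, _, rfl⟩, by decide⟩

/-- The Weyl group `W(E₆)` acts transitively on the set of exceptional vectors. -/
theorem stmt_9 (l l' : Fin 7 → ℤ) (hl : IsExc l) (hl' : IsExc l') :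
    ∃ w ∈ WE6, w l = l' := by
  obtain ⟨w, hw, hwl⟩ := toBase l (classify l hl)
  obtain ⟨w', hw', hwl'⟩ := toBase l' (classify l' hl')
  refine ⟨w'⁻¹ * w, mul_mem (inv_mem hw') hw, ?_⟩
  have happ : (w'⁻¹ * w) l = w'⁻¹ (w l) := rfl
  rw [happ, hwl, ← hwl']
  exact w'.symm_apply_apply l'
end

section
/- The isometry group of the $E_6$ lattice is $W(E_6)\times\{\pm 1\}$: every $\mathbb{Z}$-linear automorphism $g$ of the sublattice $E_6=k^{\perp}$ preserving the restricted bilinear form is of the form $g=w|_{E_6}$ or $g=-w|_{E_6}$ for some $w\in W(E_6)$, and $-\mathrm{id}_{E_6}$ is not the restriction to $E_6$ of any element of $W(E_6)$. -/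
/-- The `E₆` lattice `k^⊥ = {x : ⟨x,k⟩ = 0}`, as a `ℤ`-submodule of `ℤ⁷`. -/
def E6L : Submodule ℤ (Fin 7 → ℤ) where
  carrier := {x | form x kvec = 0}
  zero_mem' := by simp [form]
  add_mem' := by
    intro a b ha hb
    simp only [Set.mem_setOf_eq] at *
    rw [form_add_left, ha, hb]; ring
  smul_mem' := by
    intro c x hx
    simp only [Set.mem_setOf_eq] at *
    rw [form_smul_left, hx, mul_zero]

/-!
On `k^⊥` the form is negative definite, so roots are short vectors; listing them shows that
every root has simple-root coordinates of constant sign, hence pairs nontrivially with `ρ`, the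
sum of the positive roots. Given an isometry `g`, pick `w ∈ W(E₆)` minimising `⟨w g ρ, ρ⟩`
(bounded below by Cauchy–Schwarz); then `u = w g ρ` pairs to at most `-1` with each simple root.
Each root `w g αᵢ` pairs to `⟨ρ, αᵢ⟩ = -1` with `u`, which forces it to be a simple root, so
`w g` permutes the simple roots by an automorphism of the Dynkin diagram: the identity, or the
flip, which is realised by `-w₀` for the longest element `w₀`.
-/

local notation "V" => Fin 7 → ℤ

lemma exists_eq_single_of_nonneg_of_sum_le_one {ι : Type*} [Fintype ι] [DecidableEq ι]
    {c : ι → ℤ} (h0 : ∀ i, 0 ≤ c i) (h1 : ∑ i, c i ≤ 1) (hc : c ≠ 0) :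
    ∃ j, c = Pi.single j 1 := by
  obtain ⟨j, hj⟩ := Function.ne_iff.mp hc
  have hrest := Finset.sum_nonneg fun i (_ : i ∈ Finset.univ.erase j) => h0 i
  have hsplit := Finset.add_sum_erase Finset.univ c (Finset.mem_univ j)
  have hcj : c j = 1 := by have := h0 j; simp only [Pi.zero_apply] at hj; omega
  have hzero : ∀ i ∈ Finset.univ.erase j, c i = 0 :=
    (Finset.sum_eq_zero_iff_of_nonneg fun i _ => h0 i).mp (by linarith)
  refine ⟨j, funext fun i => ?_⟩
  rcases eq_or_ne i j with rfl | hij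
  · simp [hcj]
  · simp [hij, hzero i (Finset.mem_erase.mpr ⟨hij, Finset.mem_univ i⟩)]

lemma form_symm (x y : V) : form x y = form y x := by
  simp only [form, mul_comm (x _) (y _)]

lemma form_add_right (x y z : V) : form x (y + z) = form x y + form x z := by
  rw [form_symm, form_add_left, form_symm y, form_symm z]

lemma form_smul_right (c : ℤ) (x y : V) : form x (c • y) = c * form x y := by
  rw [form_symm, form_smul_left, form_symm]

lemma form_sum_smul_right {ι : Type*} [Fintype ι] (x : V) (c : ι → ℤ) (v : ι → V) :
    form x (∑ i, c i • v i) = ∑ i, c i * form x (v i) := by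
  let formₗ : V →ₗ[ℤ] ℤ :=
    { toFun := form x, map_add' := form_add_right x, map_smul' := fun c y => form_smul_right c x y }
  change formₗ _ = _
  rw [map_sum]
  exact Finset.sum_congr rfl fun i _ => form_smul_right _ _ _

lemma form_kvec_eq (x : V) : form x kvec = -3 * x 0 - (x 1 + x 2 + x 3 + x 4 + x 5 + x 6) := by
  simp only [form, kvec, Fin.sum_univ_seven, Fin.isValue, ↓reduceIte, Fin.reduceEq]
  ring

lemma form_self_eq (x : V) :
    form x x = x 0 ^ 2 - (x 1 ^ 2 + x 2 ^ 2 + x 3 ^ 2 + x 4 ^ 2 + x 5 ^ 2 + x 6 ^ 2) := by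
  simp only [form, Fin.sum_univ_seven]
  ring

/-- On `k^⊥`, `x₁ + ⋯ + x₆ = -3x₀`, and Cauchy–Schwarz for `(x₁, …, x₆)` gives `9x₀² ≤ 6 ∑ xᵢ²`. -/
lemma form_self_nonpos {x : V} (hx : form x kvec = 0) : form x x ≤ 0 := by
  rw [form_kvec_eq] at hx
  have hsum : (x 1 + x 2 + x 3 + x 4 + x 5 + x 6) ^ 2 = 9 * x 0 ^ 2 := by
    rw [show x 1 + x 2 + x 3 + x 4 + x 5 + x 6 = -3 * x 0 by linarith]; ring
  rw [form_self_eq]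
  nlinarith [hsum, sq_nonneg (x 1 - x 2), sq_nonneg (x 1 - x 3), sq_nonneg (x 1 - x 4),
    sq_nonneg (x 1 - x 5), sq_nonneg (x 1 - x 6), sq_nonneg (x 2 - x 3), sq_nonneg (x 2 - x 4),
    sq_nonneg (x 2 - x 5), sq_nonneg (x 2 - x 6), sq_nonneg (x 3 - x 4), sq_nonneg (x 3 - x 5),
    sq_nonneg (x 3 - x 6), sq_nonneg (x 4 - x 5), sq_nonneg (x 4 - x 6), sq_nonneg (x 5 - x 6)]

lemma form_sq_le_form_self_mul_form_self {x y : V} (hx : form x kvec = 0) (hy : form y kvec = 0) :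
    form x y ^ 2 ≤ form x x * form y y := by
  have key : ∀ a b : ℤ, a ^ 2 * form x x + 2 * a * b * form x y + b ^ 2 * form y y ≤ 0 := by
    intro a b
    have hz : form (a • x + b • y) kvec = 0 := by
      rw [form_add_left, form_smul_left, form_smul_left, hx, hy]; ring
    have := form_self_nonpos hz
    simp only [form_add_left, form_add_right, form_smul_left, form_smul_right,
      form_symm y x] at this
    linarith
  have hxx := form_self_nonpos hx
  have hyy := form_self_nonpos hy
  rcases hyy.lt_or_eq with hyy | hyy
  · nlinarith [key (form y y) (-form x y)]
  rcases hxx.lt_or_eq with hxx | hxx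
  · nlinarith [key (-form x y) (form x x)]
  have := key 1 1
  have := key 1 (-1)
  rw [hxx, hyy]
  nlinarith

section Weyl

lemma reflEquiv_apply (r : V) (hr : IsRoot r) (x : V) : reflEquiv r hr x = x + form x r • r :=
  rfl

lemma reflEquiv_mem_WE6 (r : V) (hr : IsRoot r) : reflEquiv r hr ∈ WE6 :=
  Subgroup.subset_closure ⟨r, hr, rfl⟩

lemma form_reflEquiv (r : V) (hr : IsRoot r) (x y : V) :
    form (reflEquiv r hr x) (reflEquiv r hr y) = form x y := by
  simp only [reflEquiv_apply, form_add_left, form_add_right, form_smul_left, form_smul_right,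
    hr.2, form_symm y r]
  ring

variable {w : V ≃ₗ[ℤ] V}

lemma form_apply_of_mem_WE6 (hw : w ∈ WE6) (x y : V) : form (w x) (w y) = form x y := by
  induction hw using Subgroup.closure_induction generalizing x y with
  | mem g hg =>
    obtain ⟨r, hr, rfl⟩ := hg
    exact form_reflEquiv r hr x y
  | one => rfl
  | mul f g _ _ hf hg => exact (hf _ _).trans (hg x y)
  | inv f _ hf => simpa using (hf (f⁻¹ x) (f⁻¹ y)).symm

lemma apply_kvec_of_mem_WE6 (hw : w ∈ WE6) : w kvec = kvec := by
  induction hw using Subgroup.closure_induction with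
  | mem g hg =>
    obtain ⟨r, hr, rfl⟩ := hg
    rw [reflEquiv_apply, form_symm, hr.1, zero_smul, add_zero]
  | one => rfl
  | mul f g _ _ hf hg => exact (congrArg f hg).trans hf
  | inv f _ hf => exact f.symm_apply_eq.mpr hf.symm

lemma form_apply_kvec_of_mem_WE6 (hw : w ∈ WE6) (x : V) : form (w x) kvec = form x kvec := by
  conv_lhs => rw [← apply_kvec_of_mem_WE6 hw]
  exact form_apply_of_mem_WE6 hw x kvec

lemma isRoot_apply_of_mem_WE6 (hw : w ∈ WE6) {r : V} (hr : IsRoot r) : IsRoot (w r) :=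
  ⟨(form_apply_kvec_of_mem_WE6 hw r).trans hr.1, (form_apply_of_mem_WE6 hw r r).trans hr.2⟩

end Weyl

instance : DecidablePred IsRoot := fun _ => inferInstanceAs (Decidable (_ ∧ _))

def simpleRoot : Fin 6 → V :=
  ![![0, 1, -1, 0, 0, 0, 0], ![0, 0, 1, -1, 0, 0, 0], ![0, 0, 0, 1, -1, 0, 0],
    ![0, 0, 0, 0, 1, -1, 0], ![0, 0, 0, 0, 0, 1, -1], ![1, -1, -1, -1, 0, 0, 0]]

/-- The coordinates of `x ∈ k^⊥` in the basis `simpleRoot`. -/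
def simpleCoeffs (x : V) : Fin 6 → ℤ :=
  ![x 1 + x 0, x 1 + x 2 + 2 * x 0, x 1 + x 2 + x 3 + 3 * x 0, -x 5 - x 6, -x 6, x 0]

/-- Twice the Weyl vector, i.e. the sum of the positive roots. -/
def rho : V := ![11, -3, -4, -5, -6, -7, -8]

lemma isRoot_simpleRoot : ∀ i, IsRoot (simpleRoot i) := by decide

lemma form_rho_simpleRoot : ∀ i, form rho (simpleRoot i) = -1 := by decide

lemma form_rho_kvec : form rho kvec = 0 := by decide

lemma form_rho_rho : form rho rho = -78 := by decide

lemma sum_simpleCoeffs_smul {x : V} (hx : form x kvec = 0) :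
    ∑ i, simpleCoeffs x i • simpleRoot i = x := by
  rw [form_kvec_eq] at hx
  funext j
  rw [Finset.sum_apply]
  fin_cases j <;>
    simp [simpleCoeffs, simpleRoot, Fin.sum_univ_six] <;>
    linarith

lemma form_eq_sum_simpleCoeffs (u : V) {x : V} (hx : form x kvec = 0) :
    form u x = ∑ i, simpleCoeffs x i * form u (simpleRoot i) := by
  conv_lhs => rw [← sum_simpleCoeffs_smul hx]
  exact form_sum_smul_right u _ _

section Roots

variable {r : V}

lemma sum_sq_two_mul_add_of_isRoot (hr : IsRoot r) :
    ∑ i : Fin 6, (2 * r i.succ + r 0) ^ 2 = 8 - 2 * r 0 ^ 2 := by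
  have hk := hr.1
  have hn := hr.2
  rw [form_kvec_eq] at hk
  rw [form_self_eq] at hn
  rw [Fin.sum_univ_six]
  change (2 * r 1 + r 0) ^ 2 + (2 * r 2 + r 0) ^ 2 + (2 * r 3 + r 0) ^ 2 + (2 * r 4 + r 0) ^ 2
    + (2 * r 5 + r 0) ^ 2 + (2 * r 6 + r 0) ^ 2 = _
  linear_combination (-4) * hn - (4 * r 0) * hk

lemma abs_coord_le_of_isRoot (hr : IsRoot r) : |r 0| ≤ 2 ∧ ∀ i : Fin 6, |r i.succ| ≤ 1 := by
  have hsum := sum_sq_two_mul_add_of_isRoot hr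
  have hnonneg : ∀ j ∈ Finset.univ, 0 ≤ (2 * r (Fin.succ j) + r 0) ^ 2 := fun j _ =>
    sq_nonneg _
  have hterm : ∀ i : Fin 6, (2 * r i.succ + r 0) ^ 2 ≤ 8 - 2 * r 0 ^ 2 := fun i =>
    hsum ▸ Finset.single_le_sum hnonneg (Finset.mem_univ i)
  have h0 : r 0 ^ 2 ≤ 4 := by linarith [hsum ▸ Finset.sum_nonneg hnonneg]
  refine ⟨abs_le.mpr ⟨by nlinarith, by nlinarith⟩, fun i => abs_le.mpr ?_⟩
  -- `(2t + a)² + 2a² ≤ 8` forces `8t² ≤ 24`, since `3((2t + a)² + 2a²) - 8t² = (2t + 3a)²`.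
  have ht : r i.succ ^ 2 ≤ 3 := by nlinarith [hterm i, sq_nonneg (2 * r i.succ + 3 * r 0)]
  constructor <;> nlinarith

set_option maxRecDepth 10000 in
lemma simpleCoeffs_sign_of_bounded : ∀ a ∈ Finset.Icc (-2 : ℤ) 2, ∀ b ∈ Finset.Icc (-1 : ℤ) 1,
    ∀ c ∈ Finset.Icc (-1 : ℤ) 1, ∀ d ∈ Finset.Icc (-1 : ℤ) 1, ∀ e ∈ Finset.Icc (-1 : ℤ) 1,
    ∀ f ∈ Finset.Icc (-1 : ℤ) 1, ∀ g ∈ Finset.Icc (-1 : ℤ) 1, IsRoot ![a, b, c, d, e, f, g] →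
    (∀ i, 0 ≤ simpleCoeffs ![a, b, c, d, e, f, g] i) ∨
      (∀ i, simpleCoeffs ![a, b, c, d, e, f, g] i ≤ 0) := by
  decide

lemma simpleCoeffs_nonneg_or_nonpos (hr : IsRoot r) :
    (∀ i, 0 ≤ simpleCoeffs r i) ∨ ∀ i, simpleCoeffs r i ≤ 0 := by
  obtain ⟨h0, hi⟩ := abs_coord_le_of_isRoot hr
  have mem : ∀ i : Fin 6, r i.succ ∈ Finset.Icc (-1 : ℤ) 1 := fun i =>
    Finset.mem_Icc.mpr (abs_le.mp (hi i))
  have hr' : r = ![r 0, r 1, r 2, r 3, r 4, r 5, r 6] := List.ofFn_inj.mp rfl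
  rw [hr'] at hr ⊢
  exact simpleCoeffs_sign_of_bounded _ (Finset.mem_Icc.mpr (abs_le.mp h0)) _ (mem 0) _ (mem 1)
    _ (mem 2) _ (mem 3) _ (mem 4) _ (mem 5) hr

lemma simpleCoeffs_ne_zero (hr : IsRoot r) : simpleCoeffs r ≠ 0 := by
  intro h
  have h0 : r = 0 := by simpa [h] using (sum_simpleCoeffs_smul hr.1).symm
  have := hr.2
  simp [h0, form] at this

lemma form_rho_ne_zero (hr : IsRoot r) : form rho r ≠ 0 := by
  have hne := simpleCoeffs_ne_zero hr
  rw [form_eq_sum_simpleCoeffs rho hr.1]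
  simp only [form_rho_simpleRoot, mul_neg_one, Finset.sum_neg_distrib, neg_ne_zero]
  rcases simpleCoeffs_nonneg_or_nonpos hr with h | h
  · rw [Ne, Finset.sum_eq_zero_iff_of_nonneg fun i _ => h i]
    exact fun hz => hne (funext fun i => hz i (Finset.mem_univ i))
  · rw [Ne, ← neg_eq_zero, ← Finset.sum_neg_distrib,
      Finset.sum_eq_zero_iff_of_nonneg fun i _ => neg_nonneg.mpr (h i)]
    exact fun hz => hne (funext fun i => neg_eq_zero.mp (hz i (Finset.mem_univ i)))

end Roots

lemma exists_eq_simpleRoot_of_form_eq_neg_one {u r : V} (hu : ∀ i, form u (simpleRoot i) ≤ -1)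
    (hr : IsRoot r) (hur : form u r = -1) : ∃ i, r = simpleRoot i := by
  rw [form_eq_sum_simpleCoeffs u hr.1] at hur
  rcases simpleCoeffs_nonneg_or_nonpos hr with hpos | hneg
  · have hsum : ∑ i, simpleCoeffs r i ≤ 1 := by
      have : ∀ i ∈ Finset.univ, simpleCoeffs r i * form u (simpleRoot i) ≤ -simpleCoeffs r i :=
        fun i _ => by nlinarith [hpos i, hu i]
      have := Finset.sum_le_sum this
      rw [Finset.sum_neg_distrib] at this
      linarith
    obtain ⟨j, hj⟩ := exists_eq_single_of_nonneg_of_sum_le_one hpos hsum (simpleCoeffs_ne_zero hr)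
    refine ⟨j, ?_⟩
    rw [← sum_simpleCoeffs_smul hr.1, hj]
    simp [Pi.single_apply]
  · have : 0 ≤ ∑ i, simpleCoeffs r i * form u (simpleRoot i) :=
      Finset.sum_nonneg fun i _ => mul_nonneg_of_nonpos_of_nonpos (hneg i) (by linarith [hu i])
    omega

lemma exists_mem_WE6_form_simpleRoot_nonpos {v : V} (hv : form v kvec = 0) :
    ∃ w ∈ WE6, ∀ i, form (w v) (simpleRoot i) ≤ 0 := by
  have hbdd : ∃ b, ∀ z, (∃ w ∈ WE6, form (w v) rho = z) → b ≤ z := by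
    refine ⟨78 * form v v, ?_⟩
    rintro _ ⟨w, hw, rfl⟩
    have hcs := form_sq_le_form_self_mul_form_self
      ((form_apply_kvec_of_mem_WE6 hw v).trans hv) form_rho_kvec
    rw [form_apply_of_mem_WE6 hw, form_rho_rho] at hcs
    nlinarith [form_self_nonpos hv]
  obtain ⟨_, ⟨w, hw, rfl⟩, hmin⟩ := Int.exists_least_of_bdd hbdd ⟨_, 1, one_mem _, rfl⟩
  refine ⟨w, hw, fun i => not_lt.mp fun hi => ?_⟩
  -- reflecting in a simple root on which `w v` is positive lowers the pairing with `rho`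
  have := hmin _ ⟨_, mul_mem (reflEquiv_mem_WE6 _ (isRoot_simpleRoot i)) hw, rfl⟩
  rw [LinearEquiv.mul_apply, reflEquiv_apply, form_add_left, form_smul_left,
    form_symm (simpleRoot i), form_rho_simpleRoot] at this
  linarith

def dynkinInvolution : Fin 6 → Fin 6 := ![4, 3, 2, 1, 0, 5]

lemma eq_id_or_eq_dynkinInvolution {π : Fin 6 → Fin 6}
    (hπ : ∀ i j, form (simpleRoot (π i)) (simpleRoot (π j)) = form (simpleRoot i) (simpleRoot j)) :
    π = id ∨ π = dynkinInvolution := by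
  -- `π` maps the path `0 - 1 - 2 - 3 - 4` of the Dynkin diagram to a path and `5` to the
  -- remaining neighbour of `π 2`
  have key : ∀ a b : Fin 6, form (simpleRoot a) (simpleRoot b) = 1 →
      ∀ c, form (simpleRoot b) (simpleRoot c) = 1 → form (simpleRoot a) (simpleRoot c) = 0 →
      ∀ d, form (simpleRoot c) (simpleRoot d) = 1 → form (simpleRoot b) (simpleRoot d) = 0 →
      ∀ e, form (simpleRoot d) (simpleRoot e) = 1 → form (simpleRoot c) (simpleRoot e) = 0 →
      ∀ f, form (simpleRoot c) (simpleRoot f) = 1 → form (simpleRoot b) (simpleRoot f) = 0 →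
        form (simpleRoot d) (simpleRoot f) = 0 →
      ![a, b, c, d, e, f] = id ∨ ![a, b, c, d, e, f] = dynkinInvolution := by
    decide
  have hπ' : π = ![π 0, π 1, π 2, π 3, π 4, π 5] := List.ofFn_inj.mp rfl
  rw [hπ']
  exact key _ _ (hπ 0 1) _ (hπ 1 2) (hπ 0 2) _ (hπ 2 3) (hπ 1 3) _ (hπ 3 4) (hπ 2 4)
    _ (hπ 2 5) (hπ 1 5) (hπ 3 5)

/-- The longest element of `W(E₆)`, as the product of the reflections in four mutually
orthogonal roots. -/
def longestElement : V ≃ₗ[ℤ] V :=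
  reflEquiv ![-2, 1, 1, 1, 1, 1, 1] (by decide) * reflEquiv ![0, -1, 0, 0, 0, 0, 1] (by decide) *
    reflEquiv ![0, 0, -1, 0, 0, 1, 0] (by decide) * reflEquiv ![0, 0, 0, -1, 1, 0, 0] (by decide)

lemma longestElement_mem_WE6 : longestElement ∈ WE6 :=
  mul_mem (mul_mem (mul_mem (reflEquiv_mem_WE6 _ _) (reflEquiv_mem_WE6 _ _))
    (reflEquiv_mem_WE6 _ _)) (reflEquiv_mem_WE6 _ _)

lemma longestElement_simpleRoot :
    ∀ i, longestElement (simpleRoot i) = -simpleRoot (dynkinInvolution i) := by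
  decide

section Isometry

def simpleRootE6 (i : Fin 6) : E6L := ⟨simpleRoot i, (isRoot_simpleRoot i).1⟩

lemma span_simpleRootE6 : Submodule.span ℤ (Set.range simpleRootE6) = ⊤ := by
  refine eq_top_iff.mpr fun x _ => ?_
  have hx : x = ∑ i, simpleCoeffs x i • simpleRootE6 i :=
    Subtype.ext (by simpa [simpleRootE6] using (sum_simpleCoeffs_smul x.2).symm)
  rw [hx]
  exact Submodule.sum_mem _ fun i _ =>
    Submodule.smul_mem _ _ (Submodule.subset_span ⟨i, rfl⟩)

lemma coe_apply_eq_of_simpleRootE6 {f : E6L →ₗ[ℤ] E6L} {F : V →ₗ[ℤ] V}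
    (h : ∀ i, (f (simpleRootE6 i) : V) = F (simpleRoot i)) (x : E6L) : (f x : V) = F x :=
  LinearMap.congr_fun (LinearMap.ext_on_range (f := E6L.subtype ∘ₗ f) (g := F ∘ₗ E6L.subtype)
    span_simpleRootE6 h) x

def IsIsometry (g : E6L ≃ₗ[ℤ] E6L) : Prop := ∀ x y : E6L, form (g x : V) (g y : V) = form (x : V) y

variable {g : E6L ≃ₗ[ℤ] E6L}

lemma isRoot_symm_apply (hg : IsIsometry g) {x : E6L} (hx : IsRoot x) : IsRoot (g.symm x : V) :=
  ⟨(g.symm x).2, by rw [← hg, LinearEquiv.apply_symm_apply]; exact hx.2⟩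

lemma exists_mem_WE6_apply_simpleRootE6 (hg : IsIsometry g) :
    ∃ w ∈ WE6, ∃ π : Fin 6 → Fin 6, ∀ i, w (g (simpleRootE6 i)) = simpleRoot (π i) := by
  let rhoE6 : E6L := ⟨rho, form_rho_kvec⟩
  obtain ⟨w, hw, hdom⟩ := exists_mem_WE6_form_simpleRoot_nonpos (g rhoE6).2
  -- `w (g rho)` is regular, being the image of `rho` under the isometry `w ∘ g`
  have hreg : ∀ j, form (w (g rhoE6)) (simpleRoot j) ≤ -1 := by
    intro j
    have hroot := isRoot_apply_of_mem_WE6 (inv_mem hw) (isRoot_simpleRoot j)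
    let y : E6L := g.symm ⟨w⁻¹ (simpleRoot j), hroot.1⟩
    have hy : form (w (g rhoE6)) (simpleRoot j) = form rho y :=
      calc _ = form (w (g rhoE6)) (w (g y)) := by simp [y]
        _ = form rho y := (form_apply_of_mem_WE6 hw _ _).trans (hg rhoE6 y)
    have hne : form rho y ≠ 0 := form_rho_ne_zero (isRoot_symm_apply hg (x := ⟨_, hroot.1⟩) hroot)
    have hle : form rho y ≤ 0 := hy ▸ hdom j
    rw [hy]
    omega
  have hsimple : ∀ i, ∃ j, w (g (simpleRootE6 i)) = simpleRoot j := by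
    intro i
    refine exists_eq_simpleRoot_of_form_eq_neg_one hreg (isRoot_apply_of_mem_WE6 hw ?_) ?_
    · exact ⟨(g _).2, (hg _ _).trans (isRoot_simpleRoot i).2⟩
    · rw [form_apply_of_mem_WE6 hw, hg]
      exact form_rho_simpleRoot i
  choose π hπ using hsimple
  exact ⟨w, hw, π, hπ⟩

theorem exists_mem_WE6_eq_or_eq_neg (hg : IsIsometry g) :
    (∃ w ∈ WE6, ∀ x : E6L, (g x : V) = w x) ∨ (∃ w ∈ WE6, ∀ x : E6L, (g x : V) = -w x) := by
  obtain ⟨w, hw, π, hπ⟩ := exists_mem_WE6_apply_simpleRootE6 hg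
  have hg_simple : ∀ i, (g (simpleRootE6 i) : V) = w⁻¹ (simpleRoot (π i)) := fun i =>
    w.eq_symm_apply.mpr (hπ i)
  have hcartan : ∀ i j,
      form (simpleRoot (π i)) (simpleRoot (π j)) = form (simpleRoot i) (simpleRoot j) := by
    intro i j
    rw [← hπ, ← hπ, form_apply_of_mem_WE6 hw, hg]
    rfl
  rcases eq_id_or_eq_dynkinInvolution hcartan with rfl | rfl
  · exact Or.inl ⟨w⁻¹, inv_mem hw, coe_apply_eq_of_simpleRootE6 (F := (w⁻¹ : V ≃ₗ[ℤ] V).toLinearMap)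
      (f := g.toLinearMap) hg_simple⟩
  · refine Or.inr ⟨w⁻¹ * longestElement, mul_mem (inv_mem hw) longestElement_mem_WE6, ?_⟩
    refine coe_apply_eq_of_simpleRootE6 (F := -(w⁻¹ * longestElement : V ≃ₗ[ℤ] V).toLinearMap)
      (f := g.toLinearMap) fun i => ?_
    change (g (simpleRootE6 i) : V) = _
    rw [hg_simple]
    simp [longestElement_simpleRoot]

end Isometry

/-- Elements of `W(E₆)` fix `k`, so `-id` would send `x = 3 f₁ + k` to `-3 f₁ - k`, forcing
`3 (w f₁ + f₁) = -2 k`, which is impossible in `ℤ⁷`. -/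
theorem neg_ne_apply_of_mem_WE6 {w : V ≃ₗ[ℤ] V} (hw : w ∈ WE6) :
    ¬ ∀ x : V, form x kvec = 0 → w x = -x := by
  intro hneg
  have h := congrFun (hneg ((3 : ℤ) • fvec 1 + kvec) (by decide)) 1
  rw [map_add, map_smul, apply_kvec_of_mem_WE6 hw] at h
  change 3 * w (fvec 1) 1 + 1 = -(3 * 1 + 1) at h
  omega

/-- The isometry group of the `E₆` lattice is `W(E₆) × {±1}`: every `ℤ`-linear
automorphism of `E₆ = k^⊥` preserving the bilinear form is the restriction of some
`w ∈ W(E₆)` or of `-w` for some `w ∈ W(E₆)`, and `-id` is not the restriction of any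
element of `W(E₆)`. -/
theorem stmt_19 :
    (∀ g : E6L ≃ₗ[ℤ] E6L,
      (∀ x y : E6L, form ((g x : Fin 7 → ℤ)) ((g y : Fin 7 → ℤ)) =
        form (x : Fin 7 → ℤ) (y : Fin 7 → ℤ)) →
      (∃ w ∈ WE6, ∀ x : E6L, ((g x : E6L) : Fin 7 → ℤ) = w (x : Fin 7 → ℤ)) ∨
      (∃ w ∈ WE6, ∀ x : E6L, ((g x : E6L) : Fin 7 → ℤ) = -(w (x : Fin 7 → ℤ)))) ∧
    (∀ w ∈ WE6, ¬ (∀ x : Fin 7 → ℤ, form x kvec = 0 → w x = -x)) :=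
  ⟨fun _ hg => exists_mem_WE6_eq_or_eq_neg hg, fun _ hw => neg_ne_apply_of_mem_WE6 hw⟩
end
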